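/- Let (t_j)_{j≥1} be a summable sequence of nonnegative reals with sum t = Σ_j t_j^p for some 0 < p ≤ 1, and let c ≥ 0. Then Σ_{μ} c^{p|μ|} t^{pμ} / (μ!)^{p/2} ≤ Σ_{k=0}^∞ c^{pk} t^k / (k!)^{p/2}, where the left sum is over all finitely-supported multi-indices μ : ℕ → ℕ, |μ| = Σ_j μ(j), t^{pμ} = Π_j t_j^{p μ(j)}, μ! = Π_j μ(j)!. -/
import Mathlib


open scoped ENNReal NNReal

set_option maxHeartbeats 1000000

/-- Multinomial resummation: for a summable sequence of nonnegative reals `t_j` with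
`t = Σ_j t_j^p` (`0 < p ≤ 1`) and `c ≥ 0`, the sum over all finitely supported
multi-indices `μ : ℕ → ℕ` of `c^{p|μ|} t^{pμ} / (μ!)^{p/2}` is dominated by
`Σ_k c^{pk} t^k / (k!)^{p/2}`. -/
theorem multiindex_resummation (p c : ℝ) (hp0 : 0 < p) (hp1 : p ≤ 1) (hc : 0 ≤ c)
    (tseq : ℕ → ℝ) (htnn : ∀ j, 0 ≤ tseq j) (hsum : Summable fun j => tseq j ^ p)
    (t : ℝ) (ht : t = ∑' j, tseq j ^ p) :
    ∑' μ : ℕ →₀ ℕ,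
        ENNReal.ofReal
          (c ^ (p * ((μ.sum fun _ n => n : ℕ) : ℝ)) *
              (μ.prod fun j n => tseq j ^ (p * (n : ℝ))) /
            (((μ.prod fun _ n => (n.factorial : ℝ)) : ℝ) ^ (p / 2))) ≤
      ∑' k : ℕ,
        ENNReal.ofReal (c ^ (p * (k : ℝ)) * t ^ k / ((k.factorial : ℝ)) ^ (p / 2)) := by
  classical
  have hxnn : ∀ j, 0 ≤ tseq j ^ p := fun j => Real.rpow_nonneg (htnn j) p
  set x : ℕ → ℝ≥0∞ := fun j => ENNReal.ofReal (tseq j ^ p) with hxdef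
  have htnn' : 0 ≤ t := ht ▸ tsum_nonneg hxnn
  have hX : ∑' j, x j = ENNReal.ofReal t := by
    rw [ht, ENNReal.ofReal_tsum_of_nonneg hxnn hsum]
  set deg : (ℕ →₀ ℕ) → ℕ := fun μ => μ.sum fun _ n => n with hdegdef
  set F : (ℕ →₀ ℕ) → ℝ≥0∞ := fun μ =>
    ENNReal.ofReal
      (c ^ (p * ((deg μ : ℕ) : ℝ)) * (μ.prod fun j n => tseq j ^ (p * (n : ℝ))) /
        (((μ.prod fun _ n => (n.factorial : ℝ)) : ℝ) ^ (p / 2))) with hFdef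
  have hre : (∑' μ : ℕ →₀ ℕ, F μ)
      = ∑' k : ℕ, ∑' μ : {μ : ℕ →₀ ℕ // deg μ = k}, F μ.1 := by
    rw [← (Equiv.sigmaFiberEquiv deg).tsum_eq F, ENNReal.tsum_sigma']
    rfl
  refine le_trans (le_of_eq hre) (ENNReal.tsum_le_tsum fun k => ?_)
  -- fiber bound for fixed k
  set C : ℝ≥0∞ := ENNReal.ofReal (c ^ (p * (k : ℝ)) / ((k.factorial : ℝ)) ^ (p / 2)) with hCdef
  have ha : (0:ℝ) ≤ c ^ (p * (k : ℝ)) := Real.rpow_nonneg hc _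
  have hkf : (0:ℝ) < ((k.factorial : ℝ)) ^ (p / 2) :=
    Real.rpow_pos_of_pos (by exact_mod_cast k.factorial_pos) _
  have step1 : ∀ μ : {μ : ℕ →₀ ℕ // deg μ = k},
      F μ.1 ≤ C * ((Nat.multinomial μ.1.support μ.1 : ℝ≥0∞) *
        ∏ j ∈ μ.1.support, x j ^ μ.1 j) := by
    rintro ⟨μ, hμ⟩
    set m : ℕ := Nat.multinomial μ.support μ with hmdef
    set N : ℕ := μ.prod fun _ n => n.factorial with hNdef
    have hNm : (N : ℝ) * m = (k.factorial : ℝ) := by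
      have h := Nat.multinomial_spec μ.support μ
      have : N * m = k.factorial := by
        rw [hmdef, hNdef]
        rw [← hμ]
        simpa [Finsupp.prod, Finsupp.sum, hdegdef] using h
      exact_mod_cast this
    have hm1 : (1:ℝ) ≤ (m:ℝ) := by exact_mod_cast Nat.multinomial_pos μ.support μ
    have hN0 : (0:ℝ) < (N:ℝ) := by
      have : 0 < N := by
        rw [hNdef]
        exact Finset.prod_pos fun _ _ => Nat.factorial_pos _
      exact_mod_cast this
    -- the product rewrite
    have hP : (μ.prod fun j n => tseq j ^ (p * (n : ℝ)))
        = ∏ j ∈ μ.support, (tseq j ^ p) ^ (μ j) := by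
      refine Finset.prod_congr rfl fun j _ => ?_
      rw [← Real.rpow_natCast (tseq j ^ p) (μ j), ← Real.rpow_mul (htnn j)]
    have hD : (μ.prod fun _ n => (n.factorial : ℝ)) = (N : ℝ) := by
      rw [hNdef, Finsupp.prod, Finsupp.prod, Nat.cast_prod]
    have hPnn : (0:ℝ) ≤ ∏ j ∈ μ.support, (tseq j ^ p) ^ (μ j) :=
      Finset.prod_nonneg fun j _ => pow_nonneg (hxnn j) _
    -- key scalar inequality
    have hfrac : (1:ℝ) / (N:ℝ) ^ (p / 2) ≤ (m:ℝ) / ((k.factorial : ℝ)) ^ (p / 2) := by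
      have hkfN : ((k.factorial : ℝ)) ^ (p / 2) = (N:ℝ) ^ (p / 2) * (m:ℝ) ^ (p / 2) := by
        rw [← hNm, Real.mul_rpow (le_of_lt hN0) (by linarith)]
      have hmp : (m:ℝ) ^ (p / 2) ≤ (m:ℝ) := by
        calc (m:ℝ) ^ (p / 2) ≤ (m:ℝ) ^ (1:ℝ) :=
              Real.rpow_le_rpow_of_exponent_le hm1 (by linarith)
          _ = (m:ℝ) := Real.rpow_one _
      rw [hkfN, div_le_div_iff₀ (by positivity) (by positivity)]
      have hNp : (0:ℝ) < (N:ℝ) ^ (p / 2) := Real.rpow_pos_of_pos hN0 _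
      nlinarith
    -- real-level bound
    have hreal : c ^ (p * ((deg μ : ℕ) : ℝ)) * (μ.prod fun j n => tseq j ^ (p * (n : ℝ))) /
          (((μ.prod fun _ n => (n.factorial : ℝ)) : ℝ) ^ (p / 2))
        ≤ c ^ (p * (k : ℝ)) / ((k.factorial : ℝ)) ^ (p / 2) *
          ((m:ℝ) * ∏ j ∈ μ.support, (tseq j ^ p) ^ (μ j)) := by
      rw [hP, hD, hμ]
      have h1 : c ^ (p * (k : ℝ)) * (∏ j ∈ μ.support, (tseq j ^ p) ^ (μ j)) / (N:ℝ) ^ (p/2)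
          = (c ^ (p * (k : ℝ)) * ∏ j ∈ μ.support, (tseq j ^ p) ^ (μ j)) *
            ((1:ℝ) / (N:ℝ) ^ (p/2)) := by ring
      have h2 : c ^ (p * (k : ℝ)) / ((k.factorial : ℝ)) ^ (p / 2) *
            ((m:ℝ) * ∏ j ∈ μ.support, (tseq j ^ p) ^ (μ j))
          = (c ^ (p * (k : ℝ)) * ∏ j ∈ μ.support, (tseq j ^ p) ^ (μ j)) *
            ((m:ℝ) / ((k.factorial : ℝ)) ^ (p / 2)) := by ring
      rw [h1, h2]
      exact mul_le_mul_of_nonneg_left hfrac (by positivity)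
    -- pass to ENNReal
    show F μ ≤ _
    calc F μ ≤ ENNReal.ofReal (c ^ (p * (k : ℝ)) / ((k.factorial : ℝ)) ^ (p / 2) *
          ((m:ℝ) * ∏ j ∈ μ.support, (tseq j ^ p) ^ (μ j))) :=
          ENNReal.ofReal_le_ofReal hreal
      _ = C * ((m : ℝ≥0∞) * ∏ j ∈ μ.support, x j ^ μ j) := by
          rw [ENNReal.ofReal_mul (by positivity), ENNReal.ofReal_mul (by positivity),
            ENNReal.ofReal_natCast, hCdef,
            ENNReal.ofReal_prod_of_nonneg fun j _ => pow_nonneg (hxnn j) _]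
          congr 1
          congr 1
          exact Finset.prod_congr rfl fun j _ => (ENNReal.ofReal_pow (hxnn j) _)
  have step2 : (∑' μ : {μ : ℕ →₀ ℕ // deg μ = k},
      ((Nat.multinomial μ.1.support μ.1 : ℝ≥0∞) * ∏ j ∈ μ.1.support, x j ^ μ.1 j))
      ≤ (∑' j, x j) ^ k := by
    rw [ENNReal.tsum_eq_iSup_sum]
    refine iSup_le fun A => ?_
    set s : Finset ℕ := A.sup fun μ => μ.1.support with hsdef
    set h : (ℕ → ℕ) → ℝ≥0∞ := fun ν => (Nat.multinomial s ν : ℝ≥0∞) * ∏ i ∈ s, x i ^ ν i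
      with hhdef
    have hsupp : ∀ μ ∈ A, (μ : {μ : ℕ →₀ ℕ // deg μ = k}).1.support ⊆ s :=
      fun μ hμ => Finset.le_sup (f := fun ν : {μ : ℕ →₀ ℕ // deg μ = k} => ν.1.support) hμ
    have hterm : ∀ μ ∈ A, (Nat.multinomial (μ : {μ : ℕ →₀ ℕ // deg μ = k}).1.support μ.1 : ℝ≥0∞)
        * ∏ j ∈ μ.1.support, x j ^ μ.1 j = h ⇑μ.1 := by
      intro μ hμ
      have h1 : Nat.multinomial μ.1.support ⇑μ.1 = Nat.multinomial s ⇑μ.1 := by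
        unfold Nat.multinomial
        rw [Finset.sum_subset (hsupp μ hμ), Finset.prod_subset (hsupp μ hμ)]
        · intro i _ hi
          simp [Finsupp.notMem_support_iff.mp hi]
        · intro i _ hi
          simp [Finsupp.notMem_support_iff.mp hi]
      have h2 : (∏ j ∈ μ.1.support, x j ^ μ.1 j) = ∏ i ∈ s, x i ^ μ.1 i := by
        refine Finset.prod_subset (hsupp μ hμ) fun i _ hi => ?_
        simp [Finsupp.notMem_support_iff.mp hi]
      rw [hhdef, h1, h2]
    have hinj : Set.InjOn (fun μ : {μ : ℕ →₀ ℕ // deg μ = k} => ⇑μ.1) A := by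
      intro a _ b _ hab
      exact Subtype.ext (DFunLike.coe_injective hab)
    have himg : A.image (fun μ : {μ : ℕ →₀ ℕ // deg μ = k} => ⇑μ.1) ⊆ Finset.piAntidiag s k := by
      intro ν hν
      rw [Finset.mem_image] at hν
      obtain ⟨μ, hμA, rfl⟩ := hν
      rw [Finset.mem_piAntidiag]
      constructor
      · rw [← Finset.sum_subset (hsupp μ hμA) fun i _ hi => Finsupp.notMem_support_iff.mp hi]
        exact μ.2
      · intro i hi
        exact hsupp μ hμA (Finsupp.mem_support_iff.mpr hi)
    calc (∑ μ ∈ A, (Nat.multinomial (μ : {μ : ℕ →₀ ℕ // deg μ = k}).1.support μ.1 : ℝ≥0∞)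
          * ∏ j ∈ μ.1.support, x j ^ μ.1 j)
        = ∑ μ ∈ A, h ⇑μ.1 := Finset.sum_congr rfl hterm
      _ = ∑ ν ∈ A.image (fun μ : {μ : ℕ →₀ ℕ // deg μ = k} => ⇑μ.1), h ν :=
          (Finset.sum_image fun a ha b hb hab => hinj ha hb hab).symm
      _ ≤ ∑ ν ∈ Finset.piAntidiag s k, h ν := Finset.sum_le_sum_of_subset himg
      _ = (∑ i ∈ s, x i) ^ k := (Finset.sum_pow_eq_sum_piAntidiag s x k).symm
      _ ≤ (∑' j, x j) ^ k := pow_le_pow_left' (ENNReal.sum_le_tsum s) k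
  calc (∑' μ : {μ : ℕ →₀ ℕ // deg μ = k}, F μ.1)
      ≤ ∑' μ : {μ : ℕ →₀ ℕ // deg μ = k}, C * ((Nat.multinomial μ.1.support μ.1 : ℝ≥0∞) *
          ∏ j ∈ μ.1.support, x j ^ μ.1 j) := ENNReal.tsum_le_tsum step1
    _ = C * ∑' μ : {μ : ℕ →₀ ℕ // deg μ = k}, ((Nat.multinomial μ.1.support μ.1 : ℝ≥0∞) *
          ∏ j ∈ μ.1.support, x j ^ μ.1 j) := ENNReal.tsum_mul_left
    _ ≤ C * (∑' j, x j) ^ k := mul_le_mul_right step2 C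
    _ = ENNReal.ofReal (c ^ (p * (k : ℝ)) * t ^ k / ((k.factorial : ℝ)) ^ (p / 2)) := by
        rw [hX, ← ENNReal.ofReal_pow htnn', hCdef, ← ENNReal.ofReal_mul (by positivity)]
        congr 1
        ring
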